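/- arXiv:2201.00533 — 6 statements merged into one kernel-verified Lean document; each statement's English description precedes it below -/
import Mathlib

section
/- Let G = (V, E) be a finite simple graph with a distinguished vertex v₀ ∈ V, and let λ : E → ℂ be any labeling. For a realization ρ of G write (x_v, y_v) = ρ(v) − ρ(v₀) for v ∈ V. Then the map sending ρ to the pair of functions (p, q), where p_v = x_v + i·y_v and q_v = x_v − i·y_v, induces a bijection between the set of equivalence classes (under direct isometries of ℂ²) of realizations of G compatible with λ and the set of orbits, under the ℂ*-action α · (p, q) = (α·p, α⁻¹·q), of the solution set {(p, q) : V → ℂ × ℂ | p_{v₀} = q_{v₀} = 0 and (p_u − p_v)·(q_u − q_v) = λ(e) for every edge e = {u, v} ∈ E}. In particular, the number of equivalence classes of compatible realizations equals the number of such orbits. -/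
open SimpleGraph

/-- A finite simple graph is a Laman graph if `|E| = 2|V| - 3` and every subgraph
`(V', E')` with `|V'| ≥ 2` satisfies `|E'| ≤ 2|V'| - 3`. -/
def IsLaman {V : Type*} [Finite V] (G : SimpleGraph V) : Prop :=
  (G.edgeSet.ncard : ℤ) = 2 * (Nat.card V : ℤ) - 3 ∧
  ∀ H : G.Subgraph, 2 ≤ H.verts.ncard →
    (H.edgeSet.ncard : ℤ) ≤ 2 * (H.verts.ncard : ℤ) - 3

/-- A realization `ρ : V → ℂ²` is compatible with a labeling `lam : E → ℂ` if for every
edge `{u,v}` one has `(ρ(u)₁ - ρ(v)₁)² + (ρ(u)₂ - ρ(v)₂)² = lam {u,v}`. -/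
def Compatible {V : Type*} (G : SimpleGraph V) (lam : G.edgeSet → ℂ)
    (ρ : V → Fin 2 → ℂ) : Prop :=
  ∀ u v (h : G.Adj u v),
    (ρ u 0 - ρ v 0) ^ 2 + (ρ u 1 - ρ v 1) ^ 2 =
      lam ⟨s(u, v), (SimpleGraph.mem_edgeSet G).mpr h⟩

/-- Two realizations are equivalent if they differ by a direct isometry of `ℂ²`:
`ρ'(v) = A·ρ(v) + b` with `AᵀA = 1` and `det A = 1`. -/
def EquivRealization {V : Type*} (ρ ρ' : V → Fin 2 → ℂ) : Prop :=
  ∃ (A : Matrix (Fin 2) (Fin 2) ℂ) (b : Fin 2 → ℂ),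
    A.transpose * A = 1 ∧ A.det = 1 ∧ ∀ v, ρ' v = A.mulVec (ρ v) + b

/-- The type of equivalence classes of realizations of `G` compatible with `lam`. -/
def RealizationClasses {V : Type*} (G : SimpleGraph V) (lam : G.edgeSet → ℂ) : Type _ :=
  Quot (fun ρ ρ' : { ρ : V → Fin 2 → ℂ // Compatible G lam ρ } => EquivRealization ρ.1 ρ'.1)

/-- `(G, lam)` is realizable if there exists a compatible realization. -/
def Realizable {V : Type*} (G : SimpleGraph V) (lam : G.edgeSet → ℂ) : Prop :=
  ∃ ρ, Compatible G lam ρ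

/-- `(G, lam)` is rigid if it is realizable and has only finitely many compatible
realizations up to equivalence. -/
def RigidLabeled {V : Type*} (G : SimpleGraph V) (lam : G.edgeSet → ℂ) : Prop :=
  Realizable G lam ∧ Finite (RealizationClasses G lam)

/-- `G` is generically rigid if `(G, lam)` is rigid for all `lam` in a dense open
subset of `ℂ^E`. -/
def GenericallyRigid {V : Type*} [Finite V] (G : SimpleGraph V) : Prop :=
  ∃ U : Set (G.edgeSet → ℂ), IsOpen U ∧ Dense U ∧ ∀ lam ∈ U, RigidLabeled G lam

/-- `G` has Laman number `N` if there is a dense open set of labelings `lam` for which the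
number of equivalence classes of compatible realizations equals `N`. -/
def HasLamanNumber {V : Type*} [Finite V] (G : SimpleGraph V) (N : ℕ) : Prop :=
  ∃ U : Set (G.edgeSet → ℂ), IsOpen U ∧ Dense U ∧
    ∀ lam ∈ U, Nat.card (RealizationClasses G lam) = N

/-- The map sending a realization `ρ` to the pair of functions `(p, q)` with
`p v = x_v + i y_v` and `q v = x_v - i y_v`, where `(x_v, y_v) = ρ v - ρ v₀`. -/
def toPQ {V : Type*} (v₀ : V) (ρ : V → Fin 2 → ℂ) : V → ℂ × ℂ := fun v =>
  ((ρ v 0 - ρ v₀ 0) + Complex.I * (ρ v 1 - ρ v₀ 1),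
   (ρ v 0 - ρ v₀ 0) - Complex.I * (ρ v 1 - ρ v₀ 1))

/-- `(p, q)` belongs to the solution set: `p v₀ = q v₀ = 0` and
`(p u - p v) (q u - q v) = lam e` for every edge `e = {u, v}`. -/
def IsPQSolution {V : Type*} (G : SimpleGraph V) (v₀ : V) (lam : G.edgeSet → ℂ)
    (pq : V → ℂ × ℂ) : Prop :=
  pq v₀ = (0, 0) ∧
  ∀ u v (h : G.Adj u v),
    ((pq u).1 - (pq v).1) * ((pq u).2 - (pq v).2) =
      lam ⟨s(u, v), (SimpleGraph.mem_edgeSet G).mpr h⟩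

/-- The `ℂ*`-action relation: `α • (p, q) = (α p, α⁻¹ q)`. -/
def PQOrbitRel {V : Type*} (pq pq' : V → ℂ × ℂ) : Prop :=
  ∃ α : ℂˣ, ∀ v, pq' v = ((α : ℂ) * (pq v).1, (α : ℂ)⁻¹ * (pq v).2)

/-- The set of orbits of the solution set under the `ℂ*`-action. -/
def PQOrbits {V : Type*} (G : SimpleGraph V) (v₀ : V) (lam : G.edgeSet → ℂ) : Type _ :=
  Quot (fun s s' : { pq : V → ℂ × ℂ // IsPQSolution G v₀ lam pq } => PQOrbitRel s.1 s'.1)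

/-!
In the isotropic coordinates `p = x + i y`, `q = x - i y` of `ℂ²` the quadratic form
`x² + y²` becomes `p q`, and a direct isometry fixing the origin, whose matrix is
`!![a, -b; b, a]` with `a² + b² = 1`, becomes `(p, q) ↦ (α p, α⁻¹ q)` with `α = a + i b`.
Translations are absorbed by measuring from `ρ v₀`, so realizations modulo direct isometries
match solutions `(p, q)` modulo the `ℂ*`-action.
-/

open Complex Matrix

section SpecialOrthogonalFinTwo

attribute [local instance] starRingOfComm

theorem Matrix.transpose_mul_self_eq_one_and_det_eq_one_iff_fin_two {R : Type*} [CommRing R]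
    {A : Matrix (Fin 2) (Fin 2) R} :
    Aᵀ * A = 1 ∧ A.det = 1 ↔ ∃ a b : R, A = !![a, -b; b, a] ∧ a ^ 2 + b ^ 2 = 1 := by
  rw [← mem_orthogonalGroup_iff', ← mem_specialOrthogonalGroup_iff]
  constructor
  · rw [mem_specialOrthogonalGroup_fin_two_iff]
    rintro ⟨h00, h01, hsq⟩
    refine ⟨A 0 0, A 1 0, ?_, by linear_combination hsq + (A 1 0 - A 0 1) * h01⟩
    ext i j
    fin_cases i <;> fin_cases j <;> simp [h01, ← h00]
  · rintro ⟨a, b, rfl, hab⟩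
    simpa [of_mem_specialOrthogonalGroup_fin_two_iff] using hab

end SpecialOrthogonalFinTwo

noncomputable def isotropicCoords : (Fin 2 → ℂ) ≃ₗ[ℂ] ℂ × ℂ where
  toFun x := (x 0 + I * x 1, x 0 - I * x 1)
  invFun pq := ![(pq.1 + pq.2) / 2, (pq.1 - pq.2) / (2 * I)]
  map_add' x y := by ext <;> simp <;> ring
  map_smul' c x := by ext <;> simp <;> ring
  left_inv x := by
    ext i
    fin_cases i
    · simp
    · simp
      field_simp
      ring
  right_inv pq := by
    ext <;> simp <;> field_simp <;> ring

theorem isotropicCoords_apply (x : Fin 2 → ℂ) :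
    isotropicCoords x = (x 0 + I * x 1, x 0 - I * x 1) := rfl

theorem isotropicCoords_fst_mul_snd (x : Fin 2 → ℂ) :
    (isotropicCoords x).1 * (isotropicCoords x).2 = x 0 ^ 2 + x 1 ^ 2 := by
  simp only [isotropicCoords_apply]
  linear_combination (-x 1 ^ 2) * I_sq

theorem isotropicCoords_rotation_mulVec (a b : ℂ) (x : Fin 2 → ℂ) :
    isotropicCoords (!![a, -b; b, a] *ᵥ x) =
      ((a + I * b) * (isotropicCoords x).1, (a - I * b) * (isotropicCoords x).2) := by
  ext <;> simp only [isotropicCoords_apply, mulVec_fin_two, of_apply, cons_val', cons_val_zero,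
    cons_val_one, empty_val', cons_val_fin_one]
  · linear_combination (-b * x 1) * I_sq
  · linear_combination (-b * x 1) * I_sq

section Realizations

variable {V : Type*}

theorem toPQ_apply (v₀ : V) (ρ : V → Fin 2 → ℂ) (v : V) :
    toPQ v₀ ρ v = isotropicCoords (ρ v - ρ v₀) := rfl

theorem toPQ_sub_toPQ (v₀ : V) (ρ : V → Fin 2 → ℂ) (u v : V) :
    toPQ v₀ ρ u - toPQ v₀ ρ v = isotropicCoords (ρ u - ρ v) := by
  rw [toPQ_apply, toPQ_apply, ← map_sub, sub_sub_sub_cancel_right]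

noncomputable def ofPQ (pq : V → ℂ × ℂ) : V → Fin 2 → ℂ :=
  fun v => isotropicCoords.symm (pq v)

variable (G : SimpleGraph V) (v₀ : V) (lam : G.edgeSet → ℂ)

theorem isPQSolution_toPQ {ρ : V → Fin 2 → ℂ} (hρ : Compatible G lam ρ) :
    IsPQSolution G v₀ lam (toPQ v₀ ρ) := by
  refine ⟨by rw [toPQ_apply, sub_self, map_zero, Prod.mk_zero_zero], fun u v huv => ?_⟩
  rw [← Prod.fst_sub, ← Prod.snd_sub, toPQ_sub_toPQ, isotropicCoords_fst_mul_snd]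
  exact hρ u v huv

theorem compatible_ofPQ {pq : V → ℂ × ℂ} (h : IsPQSolution G v₀ lam pq) :
    Compatible G lam (ofPQ pq) := by
  intro u v huv
  have hsub : ofPQ pq u - ofPQ pq v = isotropicCoords.symm (pq u - pq v) :=
    (map_sub isotropicCoords.symm _ _).symm
  rw [← Pi.sub_apply, ← Pi.sub_apply (ofPQ pq u), ← isotropicCoords_fst_mul_snd, hsub,
    LinearEquiv.apply_symm_apply]
  exact h.2 u v huv

theorem toPQ_ofPQ {pq : V → ℂ × ℂ} (h0 : pq v₀ = (0, 0)) : toPQ v₀ (ofPQ pq) = pq := by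
  funext v
  rw [toPQ_apply, ofPQ, ofPQ, ← map_sub, LinearEquiv.apply_symm_apply, h0, Prod.mk_zero_zero,
    sub_zero]

theorem equivRealization_ofPQ_toPQ (ρ : V → Fin 2 → ℂ) :
    EquivRealization (ofPQ (toPQ v₀ ρ)) ρ := by
  refine ⟨1, ρ v₀, by simp, by simp, fun v => ?_⟩
  rw [ofPQ, toPQ_apply, LinearEquiv.symm_apply_apply, one_mulVec, sub_add_cancel]

theorem pqOrbitRel_toPQ {ρ ρ' : V → Fin 2 → ℂ} (h : EquivRealization ρ ρ') :
    PQOrbitRel (toPQ v₀ ρ) (toPQ v₀ ρ') := by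
  obtain ⟨A, c, hA, hdet, hρ'⟩ := h
  obtain ⟨a, b, rfl, hab⟩ :=
    transpose_mul_self_eq_one_and_det_eq_one_iff_fin_two.mp ⟨hA, hdet⟩
  have hunit : (a + I * b) * (a - I * b) = 1 := by
    simpa [isotropicCoords_apply] using (isotropicCoords_fst_mul_snd ![a, b]).trans hab
  refine ⟨Units.mkOfMulEqOne _ _ hunit, fun v => ?_⟩
  rw [Units.val_mkOfMulEqOne, inv_eq_of_mul_eq_one_right hunit, toPQ_apply, toPQ_apply, hρ', hρ',
    add_sub_add_right_eq_sub, ← mulVec_sub, isotropicCoords_rotation_mulVec]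

theorem equivRealization_ofPQ {pq pq' : V → ℂ × ℂ} (h : PQOrbitRel pq pq') :
    EquivRealization (ofPQ pq) (ofPQ pq') := by
  obtain ⟨α, hα⟩ := h
  obtain ⟨x, hx⟩ := isotropicCoords.surjective ((α : ℂ), (α : ℂ)⁻¹)
  have hab : x 0 ^ 2 + x 1 ^ 2 = 1 := by
    rw [← isotropicCoords_fst_mul_snd, hx, mul_inv_cancel₀ α.ne_zero]
  obtain ⟨hA, hdet⟩ :=
    transpose_mul_self_eq_one_and_det_eq_one_iff_fin_two.mpr ⟨x 0, x 1, rfl, hab⟩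
  refine ⟨_, 0, hA, hdet, fun v => ?_⟩
  rw [add_zero, ofPQ, ofPQ, LinearEquiv.symm_apply_eq, isotropicCoords_rotation_mulVec,
    LinearEquiv.apply_symm_apply, hα v]
  simp only [isotropicCoords_apply, Prod.mk.injEq] at hx
  rw [hx.1, hx.2]

noncomputable def realizationClassesEquivPQOrbits :
    RealizationClasses G lam ≃ PQOrbits G v₀ lam where
  toFun := Quot.map (fun ρ => ⟨toPQ v₀ ρ.1, isPQSolution_toPQ G v₀ lam ρ.2⟩)
    fun _ _ => pqOrbitRel_toPQ v₀
  invFun := Quot.map (fun pq => ⟨ofPQ pq.1, compatible_ofPQ G v₀ lam pq.2⟩)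
    fun _ _ => equivRealization_ofPQ
  left_inv := Quot.ind fun ρ => Quot.sound (equivRealization_ofPQ_toPQ v₀ ρ.1)
  right_inv := Quot.ind fun pq => congrArg (Quot.mk _) (Subtype.ext (toPQ_ofPQ v₀ pq.2.1))

end Realizations

theorem realization_classes_equiv_pq_orbits_general {V : Type*} (G : SimpleGraph V)
    (v₀ : V) (lam : G.edgeSet → ℂ) :
    ∃ hsol : ∀ ρ : V → Fin 2 → ℂ, Compatible G lam ρ → IsPQSolution G v₀ lam (toPQ v₀ ρ),
      ∃ e : RealizationClasses G lam ≃ PQOrbits G v₀ lam,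
        (∀ (ρ : V → Fin 2 → ℂ) (h : Compatible G lam ρ),
          e (Quot.mk _ ⟨ρ, h⟩) = Quot.mk _ ⟨toPQ v₀ ρ, hsol ρ h⟩) ∧
        Nat.card (RealizationClasses G lam) = Nat.card (PQOrbits G v₀ lam) :=
  ⟨fun _ => isPQSolution_toPQ G v₀ lam, realizationClassesEquivPQOrbits G v₀ lam,
    fun _ _ => rfl, Nat.card_congr (realizationClassesEquivPQOrbits G v₀ lam)⟩

/-- For any labeling `lam`, the map `toPQ` sends compatible realizations to the
solution set and induces a bijection between equivalence classes of compatible realizations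
(under direct isometries of `ℂ²`) and orbits of the solution set under the `ℂ*`-action.
In particular, the number of equivalence classes equals the number of orbits. -/
theorem realization_classes_equiv_pq_orbits {V : Type*} [Finite V] (G : SimpleGraph V)
    (v₀ : V) (lam : G.edgeSet → ℂ) :
    ∃ hsol : ∀ ρ : V → Fin 2 → ℂ, Compatible G lam ρ → IsPQSolution G v₀ lam (toPQ v₀ ρ),
      ∃ e : RealizationClasses G lam ≃ PQOrbits G v₀ lam,
        (∀ (ρ : V → Fin 2 → ℂ) (h : Compatible G lam ρ),
          e (Quot.mk _ ⟨ρ, h⟩) = Quot.mk _ ⟨toPQ v₀ ρ, hsol ρ h⟩) ∧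
        Nat.card (RealizationClasses G lam) = Nat.card (PQOrbits G v₀ lam) :=
  realization_classes_equiv_pq_orbits_general G v₀ lam
end

section
/- Every Laman graph G = (V, E) with |V| ≥ 2 is connected; consequently, with dim(G) := |V| − (number of connected components of G), one has dim(G) + dim(G) = |E| + 1, i.e., the pair (G, G) is pseudo-Laman. -/
open SimpleGraph

/-! If `G` were disconnected, split `V` into a connected component `S` and its complement `Sᶜ`.
Every edge lies inside `S` or inside `Sᶜ`, and a nonempty vertex set spans at most `2|S| - 2` edges
(`2|S| - 3` by sparsity when `|S| ≥ 2`, none when `|S| = 1`), so `|E| ≤ 2|V| - 4`, contradicting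
`|E| = 2|V| - 3`. Connectedness leaves one component, and `2(|V| - 1) = |E| + 1`. -/

namespace SimpleGraph

variable {V : Type*} {G : SimpleGraph V}

lemma edgeSet_induce_eq_empty_of_subsingleton {S : Set V} (hS : S.Subsingleton) :
    ((⊤ : G.Subgraph).induce S).edgeSet = ∅ := by
  ext e
  induction e using Sym2.ind with
  | _ a b =>
    simp only [Subgraph.mem_edgeSet, Subgraph.induce_adj, Subgraph.top_adj,
      Set.mem_empty_iff_false, iff_false]
    rintro ⟨ha, hb, hab⟩
    exact hab.ne (hS ha hb)

lemma edgeSet_subset_induce_union_induce_compl {S : Set V}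
    (hS : ∀ a b, G.Adj a b → (a ∈ S ↔ b ∈ S)) :
    G.edgeSet ⊆ ((⊤ : G.Subgraph).induce S).edgeSet ∪ ((⊤ : G.Subgraph).induce Sᶜ).edgeSet := by
  intro e he
  induction e using Sym2.ind with
  | _ a b =>
    rw [mem_edgeSet] at he
    simp only [Set.mem_union, Subgraph.mem_edgeSet, Subgraph.induce_adj, Subgraph.top_adj,
      Set.mem_compl_iff, hS a b he]
    tauto

lemma ncard_edgeSet_le_induce_add_induce_compl [Finite V] {S : Set V}
    (hS : ∀ a b, G.Adj a b → (a ∈ S ↔ b ∈ S)) :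
    G.edgeSet.ncard ≤
      ((⊤ : G.Subgraph).induce S).edgeSet.ncard + ((⊤ : G.Subgraph).induce Sᶜ).edgeSet.ncard :=
  (Set.ncard_le_ncard (edgeSet_subset_induce_union_induce_compl hS)).trans
    (Set.ncard_union_le _ _)

end SimpleGraph

namespace IsLaman

open SimpleGraph

variable {V : Type*} [Finite V] {G : SimpleGraph V}

lemma two_le_card (hG : IsLaman G) : 2 ≤ Nat.card V := by
  have := hG.1
  omega

lemma ncard_edgeSet_induce_le (hG : IsLaman G) {S : Set V} (hS : S.Nonempty) :
    (((⊤ : G.Subgraph).induce S).edgeSet.ncard : ℤ) ≤ 2 * S.ncard - 2 := by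
  rcases le_or_gt 2 S.ncard with hS2 | hS1
  · have := hG.2 ((⊤ : G.Subgraph).induce S) hS2
    simp only [Subgraph.induce_verts] at this
    omega
  · have hS1 : S.ncard = 1 := by
      have := (Set.ncard_pos S.toFinite).mpr hS
      omega
    obtain ⟨a, rfl⟩ := Set.ncard_eq_one.mp hS1
    simp [edgeSet_induce_eq_empty_of_subsingleton Set.subsingleton_singleton]

lemma preconnected (hG : IsLaman G) : G.Preconnected := by
  intro u v
  by_contra huv
  set S := (G.connectedComponentMk u).supp
  have hvS : v ∉ S := fun hv => huv (ConnectedComponent.reachable_of_mem_supp _ rfl hv)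
  have hsplit := ncard_edgeSet_le_induce_add_induce_compl (G := G) (S := S)
    fun a b hab => ConnectedComponent.mem_supp_congr_adj _ hab
  have hS := hG.ncard_edgeSet_induce_le (S := S) ⟨u, rfl⟩
  have hSc := hG.ncard_edgeSet_induce_le (S := Sᶜ) ⟨v, hvS⟩
  have hcard : S.ncard + Sᶜ.ncard = Nat.card V := Set.ncard_add_ncard_compl S
  have hE := hG.1
  omega

lemma connected (hG : IsLaman G) : G.Connected :=
  have : Nonempty V := (Nat.card_pos_iff.mp (zero_lt_two.trans_le hG.two_le_card)).1
  ⟨hG.preconnected⟩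

end IsLaman

theorem laman_connected_pseudo_laman_general {V : Type*} [Finite V] (G : SimpleGraph V)
    (hG : IsLaman G) :
    G.Connected ∧
      (Nat.card V - Nat.card G.ConnectedComponent) +
        (Nat.card V - Nat.card G.ConnectedComponent) = G.edgeSet.ncard + 1 := by
  have hconn := hG.connected
  have hcc : Nat.card G.ConnectedComponent = 1 := Nat.card_eq_one_iff_unique.mpr
    ⟨hconn.preconnected.subsingleton_connectedComponent, hconn.nonempty.map G.connectedComponentMk⟩
  have hE := hG.1
  refine ⟨hconn, ?_⟩
  omega

/-- Every Laman graph with `|V| ≥ 2` is connected; consequently, with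
`dim(G) := |V| - (number of connected components)`, one has `dim(G) + dim(G) = |E| + 1`,
i.e. the pair `(G, G)` is pseudo-Laman. -/
theorem laman_connected_pseudo_laman {V : Type*} [Finite V] (G : SimpleGraph V)
    (hV : 2 ≤ Nat.card V) (hG : IsLaman G) :
    G.Connected ∧
      (Nat.card V - Nat.card G.ConnectedComponent) +
        (Nat.card V - Nat.card G.ConnectedComponent) = G.edgeSet.ncard + 1 :=
  laman_connected_pseudo_laman_general G hG
end

section
/- Let G₁ = (V₁, E₁) and G₂ = (V₂, E₂) be Laman graphs such that V₁ ∩ V₂ = {a, b} consists of exactly two vertices and E₁ ∩ E₂ = {{a, b}}, with {a,b} an edge of both graphs. Then the union graph G₁ ∪ G₂ = (V₁ ∪ V₂, E₁ ∪ E₂) is a Laman graph with |V₁| + |V₂| − 2 vertices. -/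
open SimpleGraph

/-!
Sharing two vertices and one edge, the union has `|V₁| + |V₂| - 2` vertices and
`|E₁| + |E₂| - 1` edges, hence exactly `2|V| - 3` edges. For sparsity, the edges of a subgraph
`K` of the union with vertex set `S` lie in the subgraphs of `G₁` and `G₂` induced on
`S₁ = S ∩ V₁` and `S₂ = S ∩ V₂`, where `|S₁| + |S₂| = |S| + t` and `t ≤ 2` counts the shared
vertices in `S`. If `t = 2`, both `Sᵢ` have at least two vertices and the edge `ab` lies in both
induced subgraphs, so `|E(K)| ≤ (2|S₁| - 3) + (2|S₂| - 3) - 1 = 2|S| - 3`. If `t ≤ 1`, the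
bounds `max 0 (2|Sᵢ| - 3)` (induced subgraphs on at most one vertex have no edges) already sum
to at most `2|S| - 3`.
-/

namespace SimpleGraph.Subgraph

variable {V : Type*} {G : SimpleGraph V}

lemma ncard_edgeSet_coe (H : G.Subgraph) : H.coe.edgeSet.ncard = H.edgeSet.ncard := by
  rw [← image_coe_edgeSet_coe H,
    Set.ncard_image_of_injective _ (Sym2.map.injective Subtype.val_injective)]

lemma ncard_verts_map_hom {H : G.Subgraph} (K : H.coe.Subgraph) :
    (K.map H.hom).verts.ncard = K.verts.ncard :=
  Set.ncard_image_of_injective _ hom_injective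

lemma ncard_edgeSet_map_hom {H : G.Subgraph} (K : H.coe.Subgraph) :
    (K.map H.hom).edgeSet.ncard = K.edgeSet.ncard := by
  rw [edgeSet_map, Set.ncard_image_of_injective _ (Sym2.map.injective hom_injective)]

lemma exists_map_hom_eq_iff_le {H K : G.Subgraph} :
    (∃ L : H.coe.Subgraph, L.map H.hom = K) ↔ K ≤ H := by
  constructor
  · rintro ⟨L, rfl⟩
    exact (map_mono le_top).trans_eq (map_hom_top H)
  · intro hK
    refine ⟨K.comap H.hom, ?_⟩
    ext x y
    · simpa using fun hx => hK.1 hx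
    · simp only [map_adj, comap_adj, coe_adj, coe_hom, Relation.Map]
      refine ⟨?_, fun h => ⟨⟨x, hK.1 h.fst_mem⟩, ⟨y, hK.1 h.snd_mem⟩, ⟨hK.2 h, h⟩, rfl, rfl⟩⟩
      rintro ⟨x, y, ⟨-, h⟩, rfl, rfl⟩
      exact h

lemma induce_le_self {H : G.Subgraph} {S : Set V} (hS : S ⊆ H.verts) : H.induce S ≤ H :=
  (induce_mono_right hS).trans_eq induce_self_verts

lemma edgeSet_eq_empty_of_ncard_verts_le_one [Finite V] {H : G.Subgraph}
    (h : H.verts.ncard ≤ 1) : H.edgeSet = ∅ := by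
  refine Set.eq_empty_of_forall_notMem fun e he => ?_
  induction e using Sym2.ind with
  | _ u v =>
    have huv := Subgraph.mem_edgeSet.1 he
    exact huv.ne ((Set.ncard_le_one (Set.toFinite _)).1 h _ huv.fst_mem _ huv.snd_mem)

lemma edgeSet_subset_union_induce_of_le_sup {H₁ H₂ K : G.Subgraph} (hK : K ≤ H₁ ⊔ H₂) :
    K.edgeSet ⊆ (H₁.induce (K.verts ∩ H₁.verts)).edgeSet ∪
      (H₂.induce (K.verts ∩ H₂.verts)).edgeSet := by
  intro e he
  induction e using Sym2.ind with
  | _ u v =>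
    have huv := Subgraph.mem_edgeSet.1 he
    rcases hK.2 huv with h | h
    · exact Or.inl ⟨⟨huv.fst_mem, h.fst_mem⟩, ⟨huv.snd_mem, h.snd_mem⟩, h⟩
    · exact Or.inr ⟨⟨huv.fst_mem, h.fst_mem⟩, ⟨huv.snd_mem, h.snd_mem⟩, h⟩

lemma adj_of_edgeSet_inter_eq {H₁ H₂ : G.Subgraph} {a b : V}
    (hedges : H₁.edgeSet ∩ H₂.edgeSet = {s(a, b)}) : H₁.Adj a b ∧ H₂.Adj a b :=
  (hedges ▸ rfl : s(a, b) ∈ H₁.edgeSet ∩ H₂.edgeSet)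

end SimpleGraph.Subgraph

open SimpleGraph.Subgraph

section Laman

variable {V : Type*} [Finite V] {G : SimpleGraph V}

theorem isLaman_coe_iff (H : G.Subgraph) :
    IsLaman H.coe ↔ (H.edgeSet.ncard : ℤ) = 2 * H.verts.ncard - 3 ∧
      ∀ K ≤ H, 2 ≤ K.verts.ncard → (K.edgeSet.ncard : ℤ) ≤ 2 * K.verts.ncard - 3 := by
  rw [IsLaman, ncard_edgeSet_coe, Nat.card_coe_set_eq]
  refine and_congr_right' ⟨fun h K hK => ?_, fun h L => ?_⟩
  · obtain ⟨L, rfl⟩ := exists_map_hom_eq_iff_le.2 hK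
    rw [ncard_verts_map_hom, ncard_edgeSet_map_hom]
    exact h L
  · rw [← ncard_verts_map_hom, ← ncard_edgeSet_map_hom]
    exact h _ (exists_map_hom_eq_iff_le.1 ⟨L, rfl⟩)

theorem IsLaman.ncard_edgeSet_induce_le_s6 {H : G.Subgraph} (h : IsLaman H.coe) {S : Set V}
    (hS : S ⊆ H.verts) : ((H.induce S).edgeSet.ncard : ℤ) ≤ max 0 (2 * (S.ncard : ℤ) - 3) := by
  rcases le_or_gt 2 S.ncard with hS2 | hS1
  · exact le_max_of_le_right (((isLaman_coe_iff H).1 h).2 _ (induce_le_self hS) hS2)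
  · rw [edgeSet_eq_empty_of_ncard_verts_le_one (by simpa using Nat.le_of_lt_succ hS1)]
    simp

variable {H₁ H₂ : G.Subgraph} {a b : V}

lemma ncard_verts_sup_add_two (hab : a ≠ b) (hverts : H₁.verts ∩ H₂.verts = {a, b}) :
    (H₁ ⊔ H₂).verts.ncard + 2 = H₁.verts.ncard + H₂.verts.ncard := by
  rw [verts_sup, ← Set.ncard_pair hab, ← hverts, Set.ncard_union_add_ncard_inter]

lemma ncard_edgeSet_sup_add_one (hedges : H₁.edgeSet ∩ H₂.edgeSet = {s(a, b)}) :
    (H₁ ⊔ H₂).edgeSet.ncard + 1 = H₁.edgeSet.ncard + H₂.edgeSet.ncard := by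
  rw [Subgraph.edgeSet_sup, ← Set.ncard_singleton s(a, b), ← hedges,
    Set.ncard_union_add_ncard_inter]

theorem IsLaman.ncard_edgeSet_le_of_le_sup (h₁ : IsLaman H₁.coe) (h₂ : IsLaman H₂.coe)
    (hverts : H₁.verts ∩ H₂.verts = {a, b}) (hedges : H₁.edgeSet ∩ H₂.edgeSet = {s(a, b)})
    {K : G.Subgraph} (hK : K ≤ H₁ ⊔ H₂) (hK2 : 2 ≤ K.verts.ncard) :
    (K.edgeSet.ncard : ℤ) ≤ 2 * K.verts.ncard - 3 := by
  set S₁ := K.verts ∩ H₁.verts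
  set S₂ := K.verts ∩ H₂.verts
  set E₁ := (H₁.induce S₁).edgeSet
  set E₂ := (H₂.induce S₂).edgeSet
  obtain ⟨hab₁, hab₂⟩ := adj_of_edgeSet_inter_eq hedges
  have hE : K.edgeSet.ncard ≤ (E₁ ∪ E₂).ncard :=
    Set.ncard_le_ncard (edgeSet_subset_union_induce_of_le_sup hK)
  have hS : S₁ ∪ S₂ = K.verts := by
    rw [← Set.inter_union_distrib_left, ← verts_sup, Set.inter_eq_left.2 hK.1]
  have hT : S₁ ∩ S₂ ⊆ {a, b} :=
    hverts ▸ Set.inter_subset_inter Set.inter_subset_right Set.inter_subset_right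
  have hshared : (S₁ ∩ S₂).ncard = 2 → 1 ≤ (E₁ ∩ E₂).ncard := by
    intro ht
    have hT' := Set.eq_of_subset_of_ncard_le hT (by rw [Set.ncard_pair hab₁.ne, ht])
    have ha : a ∈ S₁ ∩ S₂ := hT' ▸ Set.mem_insert a {b}
    have hb : b ∈ S₁ ∩ S₂ := hT' ▸ Set.mem_insert_of_mem a rfl
    exact (Set.ncard_pos).2 ⟨s(a, b), ⟨ha.1, hb.1, hab₁⟩, ⟨ha.2, hb.2, hab₂⟩⟩
  have hEcard := Set.ncard_union_add_ncard_inter E₁ E₂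
  have hScard := Set.ncard_union_add_ncard_inter S₁ S₂
  rw [hS] at hScard
  have ht : (S₁ ∩ S₂).ncard ≤ 2 := (Set.ncard_le_ncard hT).trans (Set.ncard_pair hab₁.ne).le
  have ht₁ : (S₁ ∩ S₂).ncard ≤ S₁.ncard := Set.ncard_inter_le_ncard_left _ _
  have ht₂ : (S₁ ∩ S₂).ncard ≤ S₂.ncard := Set.ncard_inter_le_ncard_right _ _
  have hS₁ : S₁.ncard ≤ K.verts.ncard := Set.ncard_inter_le_ncard_left _ _
  have hS₂ : S₂.ncard ≤ K.verts.ncard := Set.ncard_inter_le_ncard_left _ _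
  have hE₁ : (E₁.ncard : ℤ) ≤ max 0 (2 * (S₁.ncard : ℤ) - 3) :=
    h₁.ncard_edgeSet_induce_le_s6 Set.inter_subset_right
  have hE₂ : (E₂.ncard : ℤ) ≤ max 0 (2 * (S₂.ncard : ℤ) - 3) :=
    h₂.ncard_edgeSet_induce_le_s6 Set.inter_subset_right
  omega

theorem IsLaman.sup (h₁ : IsLaman H₁.coe) (h₂ : IsLaman H₂.coe)
    (hverts : H₁.verts ∩ H₂.verts = {a, b}) (hedges : H₁.edgeSet ∩ H₂.edgeSet = {s(a, b)}) :
    IsLaman (H₁ ⊔ H₂).coe := by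
  refine (isLaman_coe_iff _).2
    ⟨?_, fun _ hK hK2 => h₁.ncard_edgeSet_le_of_le_sup h₂ hverts hedges hK hK2⟩
  have := ncard_verts_sup_add_two (adj_of_edgeSet_inter_eq hedges).1.ne hverts
  have := ncard_edgeSet_sup_add_one hedges
  have := ((isLaman_coe_iff H₁).1 h₁).1
  have := ((isLaman_coe_iff H₂).1 h₂).1
  omega

end Laman

theorem laman_glue_edge_general {V : Type*} [Finite V]
    (H₁ H₂ : (⊤ : SimpleGraph V).Subgraph) (a b : V)
    (h₁ : IsLaman H₁.coe) (h₂ : IsLaman H₂.coe)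
    (hverts : H₁.verts ∩ H₂.verts = {a, b})
    (hedges : H₁.edgeSet ∩ H₂.edgeSet = {s(a, b)}) :
    IsLaman (H₁ ⊔ H₂).coe ∧
      (H₁ ⊔ H₂).verts.ncard = H₁.verts.ncard + H₂.verts.ncard - 2 := by
  refine ⟨h₁.sup h₂ hverts hedges, ?_⟩
  have := ncard_verts_sup_add_two (adj_of_edgeSet_inter_eq hedges).1.ne hverts
  omega

/-- If two Laman graphs `G₁ = (V₁, E₁)` and `G₂ = (V₂, E₂)` (given as subgraphs
of the complete graph on an ambient vertex set) share exactly two vertices `a ≠ b` and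
exactly the one edge `{a, b}`, which is an edge of both, then their union is a Laman graph
with `|V₁| + |V₂| - 2` vertices. -/
theorem laman_glue_edge {V : Type*} [Finite V]
    (H₁ H₂ : (⊤ : SimpleGraph V).Subgraph) (a b : V) (hab : a ≠ b)
    (h₁ : IsLaman H₁.coe) (h₂ : IsLaman H₂.coe)
    (hverts : H₁.verts ∩ H₂.verts = {a, b})
    (hedges : H₁.edgeSet ∩ H₂.edgeSet = {s(a, b)})
    (he₁ : H₁.Adj a b) (he₂ : H₂.Adj a b) :
    IsLaman (H₁ ⊔ H₂).coe ∧
      (H₁ ⊔ H₂).verts.ncard = H₁.verts.ncard + H₂.verts.ncard - 2 :=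
  laman_glue_edge_general H₁ H₂ a b h₁ h₂ hverts hedges
end

section
/- Let G₁ = (V₁, E₁) and G₂ = (V₂, E₂) be Laman graphs such that V₁ ∩ V₂ = {a, b, c} consists of exactly three vertices and E₁ ∩ E₂ = {{a,b}, {b,c}, {a,c}}, with these three edges belonging to both graphs (the shared subgraph is a triangle). Then the union graph G₁ ∪ G₂ = (V₁ ∪ V₂, E₁ ∪ E₂) is a Laman graph with |V₁| + |V₂| − 3 vertices. -/
open SimpleGraph

/-!
The triangle is a clique in both graphs, so the shared edges are exactly its three edges and
`|E₁ ∪ E₂| = |E₁| + |E₂| - 3 = 2 (|V₁| + |V₂| - 3) - 3`. For sparsity, a vertex set `S` of the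
union splits into `S ∩ V₁` and `S ∩ V₂`, which overlap in the `k` triangle vertices lying in `S`;
the edges spanned by `S` are those spanned by the two parts, and the `k.choose 2` triangle edges
among them are counted twice. Adding the Laman bounds of the two parts and using
`k.choose 2 ≥ 2k - 3` gives the bound for `S`.
-/

lemma Set.ncard_image_mk_offDiag {α : Type*} {A : Set α} (hA : A.Finite) :
    (Sym2.mk.uncurry '' A.offDiag).ncard = A.ncard.choose 2 := by
  classical
  lift A to Finset α using hA
  rw [← Finset.coe_offDiag, ← Finset.coe_image, Set.ncard_coe_finset, Sym2.card_image_offDiag,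
    Set.ncard_coe_finset]

lemma Nat.two_mul_sub_three_le_choose_two (k : ℕ) : 2 * (k : ℤ) - 3 ≤ k.choose 2 := by
  have h : k.choose 2 * 2 = k * (k - 1) := by
    rw [Nat.choose_two_right, Nat.div_two_mul_two_of_even (Nat.even_mul_pred_self k)]
  rcases k with _ | k
  · simp
  · rw [Nat.add_sub_cancel] at h
    zify at h
    rcases le_or_gt k 1 with hk | hk <;> push_cast <;> nlinarith

namespace SimpleGraph.Subgraph

variable {V : Type*} {G : SimpleGraph V}

lemma ncard_verts_coeSubgraph {H : G.Subgraph} (K : H.coe.Subgraph) :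
    (Subgraph.coeSubgraph K).verts.ncard = K.verts.ncard := by
  rw [verts_coeSubgraph]
  exact Set.ncard_image_of_injective _ Subtype.val_injective

lemma ncard_edgeSet_coeSubgraph {H : G.Subgraph} (K : H.coe.Subgraph) :
    (Subgraph.coeSubgraph K).edgeSet.ncard = K.edgeSet.ncard := by
  rw [edgeSet_map]
  exact Set.ncard_image_of_injective _ (Sym2.map.injective Subtype.val_injective)

lemma edgeSet_eq_empty_of_ncard_verts_le_one_s8 [Finite V] {K : G.Subgraph}
    (h : K.verts.ncard ≤ 1) : K.edgeSet = ∅ := by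
  refine Set.eq_empty_of_forall_notMem fun e he => ?_
  induction e using Sym2.ind with | _ u v => ?_
  have hadj : K.Adj u v := he
  have : 1 < K.verts.ncard :=
    (Set.one_lt_ncard_iff (Set.toFinite _)).2
      ⟨u, v, K.edge_vert hadj, K.edge_vert hadj.symm, hadj.ne⟩
  omega

lemma edgeSet_induce_inter_verts (H : G.Subgraph) (S : Set V) :
    (H.induce (S ∩ H.verts)).edgeSet = (H.induce S).edgeSet := by
  ext e
  induction e using Sym2.ind with | _ u v => ?_
  simp only [Subgraph.mem_edgeSet, induce_adj, Set.mem_inter_iff]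
  exact ⟨fun ⟨hu, hv, h⟩ => ⟨hu.1, hv.1, h⟩,
    fun ⟨hu, hv, h⟩ => ⟨⟨hu, H.edge_vert h⟩, ⟨hv, H.edge_vert h.symm⟩, h⟩⟩

lemma induce_sup (H₁ H₂ : G.Subgraph) (S : Set V) :
    (H₁ ⊔ H₂).induce S = H₁.induce S ⊔ H₂.induce S := by
  ext <;> simp [and_or_left]

lemma induce_inf (H₁ H₂ : G.Subgraph) (S : Set V) :
    (H₁ ⊓ H₂).induce S = H₁.induce S ⊓ H₂.induce S := by
  ext
  · simp
  · simp only [induce_adj, inf_adj]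
    tauto

lemma edgeSet_induce_of_isClique {H : G.Subgraph} (h : H.spanningCoe.IsClique H.verts)
    (S : Set V) : (H.induce S).edgeSet = Sym2.mk.uncurry '' (S ∩ H.verts).offDiag := by
  ext e
  induction e using Sym2.ind with | _ u v => ?_
  simp only [Subgraph.mem_edgeSet, induce_adj, Set.mem_image, Set.mem_offDiag, Prod.exists,
    Function.uncurry_apply_pair, Sym2.eq_iff]
  constructor
  · rintro ⟨hu, hv, huv⟩
    exact ⟨u, v, ⟨⟨hu, H.edge_vert huv⟩, ⟨hv, H.edge_vert huv.symm⟩, huv.ne⟩, .inl ⟨rfl, rfl⟩⟩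
  · rintro ⟨x, y, ⟨hx, hy, hxy⟩, ⟨rfl, rfl⟩ | ⟨rfl, rfl⟩⟩
    exacts [⟨hx.1, hy.1, h hx.2 hy.2 hxy⟩, ⟨hy.1, hx.1, h hy.2 hx.2 hxy.symm⟩]

theorem isLaman_coe_iff [Finite V] (H : G.Subgraph) :
    IsLaman H.coe ↔
      (H.edgeSet.ncard : ℤ) = 2 * H.verts.ncard - 3 ∧
        ∀ K ≤ H, 2 ≤ K.verts.ncard → (K.edgeSet.ncard : ℤ) ≤ 2 * K.verts.ncard - 3 := by
  rw [IsLaman, ncard_edgeSet_coe, Nat.card_coe_set_eq]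
  refine and_congr_right fun _ => ⟨fun h K hK hK2 => ?_, fun h K hK2 => ?_⟩
  · have hK' : Subgraph.coeSubgraph (H.restrict K) = K := by
      rw [coeSubgraph_restrict_eq, inf_eq_right.2 hK]
    have hv := ncard_verts_coeSubgraph (H.restrict K)
    have he := ncard_edgeSet_coeSubgraph (H.restrict K)
    rw [hK'] at hv he
    rw [hv, he]
    exact h _ (hv ▸ hK2)
  · rw [← ncard_verts_coeSubgraph, ← ncard_edgeSet_coeSubgraph]
    exact h _ (coeSubgraph_le K) (by rwa [ncard_verts_coeSubgraph])

/-- The `max` covers vertex sets of size at most one, where `2n - 3` is negative. -/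
theorem _root_.IsLaman.ncard_edgeSet_induce_le_s8 [Finite V] {H : G.Subgraph}
    (h : IsLaman H.coe) (S : Set V) :
    ((H.induce S).edgeSet.ncard : ℤ) ≤ max 0 (2 * ((S ∩ H.verts).ncard : ℤ) - 3) := by
  rw [← edgeSet_induce_inter_verts]
  rcases le_or_gt (S ∩ H.verts).ncard 1 with hS | hS
  · rw [edgeSet_eq_empty_of_ncard_verts_le_one_s8 hS, Set.ncard_empty]
    exact le_max_left _ _
  · have hle : H.induce (S ∩ H.verts) ≤ H :=
      (induce_mono_right Set.inter_subset_right).trans_eq induce_self_verts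
    exact le_max_of_le_right (((isLaman_coe_iff H).1 h).2 _ hle hS)

variable [Finite V] {H₁ H₂ : G.Subgraph}

theorem ncard_edgeSet_sup_of_isClique
    (hclique : (H₁ ⊓ H₂).spanningCoe.IsClique (H₁.verts ∩ H₂.verts)) :
    ((H₁ ⊔ H₂).edgeSet.ncard : ℤ) =
      H₁.edgeSet.ncard + H₂.edgeSet.ncard - (H₁.verts ∩ H₂.verts).ncard.choose 2 := by
  have h := Set.ncard_union_add_ncard_inter H₁.edgeSet H₂.edgeSet
  rw [← edgeSet_sup, ← edgeSet_inf, ← induce_self_verts (G' := H₁ ⊓ H₂),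
    edgeSet_induce_of_isClique hclique, verts_inf, Set.inter_self,
    Set.ncard_image_mk_offDiag (Set.toFinite _)] at h
  omega

theorem ncard_edgeSet_le_of_le_sup_of_isClique (h₁ : IsLaman H₁.coe) (h₂ : IsLaman H₂.coe)
    (hclique : (H₁ ⊓ H₂).spanningCoe.IsClique (H₁.verts ∩ H₂.verts))
    {K : G.Subgraph} (hK : K ≤ H₁ ⊔ H₂) (hK2 : 2 ≤ K.verts.ncard) :
    (K.edgeSet.ncard : ℤ) ≤ 2 * K.verts.ncard - 3 := by
  have hS : K.verts ⊆ H₁.verts ∪ H₂.verts := hK.1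
  have hKS : K.edgeSet.ncard ≤ ((H₁ ⊔ H₂).induce K.verts).edgeSet.ncard :=
    Set.ncard_le_ncard (edgeSet_mono (induce_self_verts (G' := K) ▸ induce_mono_left hK))
  have hedges :=
    Set.ncard_union_add_ncard_inter (H₁.induce K.verts).edgeSet (H₂.induce K.verts).edgeSet
  rw [← edgeSet_sup, ← edgeSet_inf, ← induce_sup, ← induce_inf,
    edgeSet_induce_of_isClique hclique, verts_inf,
    Set.ncard_image_mk_offDiag (Set.toFinite _)] at hedges
  have hverts := Set.ncard_union_add_ncard_inter (K.verts ∩ H₁.verts) (K.verts ∩ H₂.verts)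
  rw [← Set.inter_union_distrib_left, Set.inter_eq_left.2 hS,
    ← Set.inter_inter_distrib_left] at hverts
  have hS₁ := Set.ncard_le_ncard (Set.inter_subset_left (s := K.verts) (t := H₁.verts))
  have hS₂ := Set.ncard_le_ncard (Set.inter_subset_left (s := K.verts) (t := H₂.verts))
  have he₁ := h₁.ncard_edgeSet_induce_le_s8 K.verts
  have he₂ := h₂.ncard_edgeSet_induce_le_s8 K.verts
  have hchoose :=
    Nat.two_mul_sub_three_le_choose_two (K.verts ∩ (H₁.verts ∩ H₂.verts)).ncard
  omega

theorem isLaman_sup_of_isClique (h₁ : IsLaman H₁.coe) (h₂ : IsLaman H₂.coe)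
    (hclique : (H₁ ⊓ H₂).spanningCoe.IsClique (H₁.verts ∩ H₂.verts))
    (hk₂ : 2 ≤ (H₁.verts ∩ H₂.verts).ncard) (hk₃ : (H₁.verts ∩ H₂.verts).ncard ≤ 3) :
    IsLaman (H₁ ⊔ H₂).coe := by
  rw [isLaman_coe_iff]
  refine ⟨?_, fun K hK hK2 => ncard_edgeSet_le_of_le_sup_of_isClique h₁ h₂ hclique hK hK2⟩
  have hchoose : ((H₁.verts ∩ H₂.verts).ncard.choose 2 : ℤ) =
      2 * (H₁.verts ∩ H₂.verts).ncard - 3 := by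
    interval_cases (H₁.verts ∩ H₂.verts).ncard <;> rfl
  have hverts := Set.ncard_union_add_ncard_inter H₁.verts H₂.verts
  have he₁ := ((isLaman_coe_iff H₁).1 h₁).1
  have he₂ := ((isLaman_coe_iff H₂).1 h₂).1
  rw [ncard_edgeSet_sup_of_isClique hclique, verts_sup]
  omega

end SimpleGraph.Subgraph

open SimpleGraph.Subgraph in
theorem laman_glue_triangle_general {V : Type*} [Finite V]
    (H₁ H₂ : (⊤ : SimpleGraph V).Subgraph) (a b c : V)
    (h₁ : IsLaman H₁.coe) (h₂ : IsLaman H₂.coe)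
    (hverts : H₁.verts ∩ H₂.verts = {a, b, c})
    (hedges : H₁.edgeSet ∩ H₂.edgeSet = {s(a, b), s(b, c), s(a, c)}) :
    IsLaman (H₁ ⊔ H₂).coe ∧
      (H₁ ⊔ H₂).verts.ncard = H₁.verts.ncard + H₂.verts.ncard - 3 := by
  have hadj {u v : V} (h : s(u, v) ∈ ({s(a, b), s(b, c), s(a, c)} : Set (Sym2 V))) :
      (H₁ ⊓ H₂).spanningCoe.Adj u v := by
    rwa [spanningCoe_adj, ← Subgraph.mem_edgeSet, Subgraph.edgeSet_inf, hedges]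
  have hab : (H₁ ⊓ H₂).spanningCoe.Adj a b := hadj (by simp)
  have hbc : (H₁ ⊓ H₂).spanningCoe.Adj b c := hadj (by simp)
  have hac : (H₁ ⊓ H₂).spanningCoe.Adj a c := hadj (by simp)
  have hclique : (H₁ ⊓ H₂).spanningCoe.IsClique (H₁.verts ∩ H₂.verts) := by
    rw [hverts]
    refine isClique_insert.2 ⟨isClique_pair.2 fun _ => hbc, ?_⟩
    rintro x (rfl | rfl) -
    exacts [hab, hac]
  have h3 : (H₁.verts ∩ H₂.verts).ncard = 3 :=
    hverts ▸ Set.ncard_eq_three.2 ⟨a, b, c, hab.ne, hac.ne, hbc.ne, rfl⟩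
  refine ⟨isLaman_sup_of_isClique h₁ h₂ hclique (by omega) (by omega), ?_⟩
  have hunion := Set.ncard_union_add_ncard_inter H₁.verts H₂.verts
  rw [verts_sup]
  omega

/-- If two Laman graphs `G₁ = (V₁, E₁)` and `G₂ = (V₂, E₂)` share exactly
three vertices `a`, `b`, `c` and exactly the three edges `{a,b}`, `{b,c}`, `{a,c}` of a
common triangle (edges of both graphs), then their union is a Laman graph with
`|V₁| + |V₂| - 3` vertices. -/
theorem laman_glue_triangle {V : Type*} [Finite V]
    (H₁ H₂ : (⊤ : SimpleGraph V).Subgraph) (a b c : V)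
    (hab : a ≠ b) (hbc : b ≠ c) (hac : a ≠ c)
    (h₁ : IsLaman H₁.coe) (h₂ : IsLaman H₂.coe)
    (hverts : H₁.verts ∩ H₂.verts = {a, b, c})
    (hedges : H₁.edgeSet ∩ H₂.edgeSet = {s(a, b), s(b, c), s(a, c)})
    (he₁ab : H₁.Adj a b) (he₁bc : H₁.Adj b c) (he₁ac : H₁.Adj a c)
    (he₂ab : H₂.Adj a b) (he₂bc : H₂.Adj b c) (he₂ac : H₂.Adj a c) :
    IsLaman (H₁ ⊔ H₂).coe ∧
      (H₁ ⊔ H₂).verts.ncard = H₁.verts.ncard + H₂.verts.ncard - 3 :=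
  laman_glue_triangle_general H₁ H₂ a b c h₁ h₂ hverts hedges
end

section
/- Let G₁ = (V₁, E₁) and G₂ = (V₂, E₂) be Laman graphs such that the graph H = (V₁ ∩ V₂, E₁ ∩ E₂) is itself a Laman graph which is a subgraph of both G₁ and G₂. Then the union graph G₁ ∪ G₂ = (V₁ ∪ V₂, E₁ ∪ E₂) is a Laman graph with |V₁| + |V₂| − |V₁ ∩ V₂| vertices. -/
open SimpleGraph

/-!
Measure a subgraph by its slack `2|V'| - 3 - |E'|`. Vertex and edge counts are modular on the
lattice of subgraphs, hence so is the slack, and this alone gives the edge count of `G₁ ∪ G₂`.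
A subgraph `K` of the union splits as `(K ⊓ G₁) ⊔ (K ⊓ G₂)`. If `K` meets `H` in at most one
vertex, the pieces share no edge and modularity bounds the slack of `K` below by the slacks of
the pieces. Otherwise, modularity compares `K` with `K ⊔ H`, whose two pieces both contain the
tight graph `H` and meet exactly in it.
-/

theorem inf_sup_inf_eq_of_le_sup {α : Type*} [DistribLattice α] {a b c : α} (h : c ≤ a ⊔ b) :
    c ⊓ a ⊔ c ⊓ b = c := by
  rw [← inf_sup_left, inf_eq_left.mpr h]

namespace SimpleGraph.Subgraph

variable {V : Type*} {G : SimpleGraph V}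

noncomputable def lamanSlack (N : G.Subgraph) : ℤ :=
  2 * N.verts.ncard - 3 - N.edgeSet.ncard

def IsLamanSparse (M : G.Subgraph) : Prop :=
  ∀ N ≤ M, 2 ≤ N.verts.ncard → 0 ≤ N.lamanSlack

def IsLamanTight (M : G.Subgraph) : Prop :=
  M.lamanSlack = 0 ∧ M.IsLamanSparse

lemma ncard_verts_coeSubgraph_s10 {M : G.Subgraph} (J : M.coe.Subgraph) :
    (Subgraph.coeSubgraph J).verts.ncard = J.verts.ncard := by
  rw [verts_coeSubgraph, Set.ncard_image_of_injective _ Subtype.val_injective]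

lemma ncard_edgeSet_coeSubgraph_s10 {M : G.Subgraph} (J : M.coe.Subgraph) :
    (Subgraph.coeSubgraph J).edgeSet.ncard = J.edgeSet.ncard := by
  rw [edgeSet_map, Set.ncard_image_of_injective _ (Sym2.map.injective hom_injective)]

lemma lamanSlack_coeSubgraph {M : G.Subgraph} (J : M.coe.Subgraph) :
    (Subgraph.coeSubgraph J).lamanSlack = J.lamanSlack := by
  rw [lamanSlack, lamanSlack, ncard_verts_coeSubgraph_s10, ncard_edgeSet_coeSubgraph_s10]

lemma isLaman_coe_iff_s10 [Finite V] (M : G.Subgraph) : IsLaman M.coe ↔ M.IsLamanTight := by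
  have hcount : (M.coe.edgeSet.ncard : ℤ) = 2 * (Nat.card M.verts : ℤ) - 3 ↔
      M.lamanSlack = 0 := by
    rw [lamanSlack, ← image_coe_edgeSet_coe,
      Set.ncard_image_of_injective _ (Sym2.map.injective Subtype.val_injective),
      Nat.card_coe_set_eq]
    omega
  have hsub : (∀ J : M.coe.Subgraph, 2 ≤ J.verts.ncard →
      (J.edgeSet.ncard : ℤ) ≤ 2 * (J.verts.ncard : ℤ) - 3) ↔ M.IsLamanSparse := by
    constructor
    · intro h N hN h2
      have hN' : Subgraph.coeSubgraph (M.restrict N) = N := by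
        rw [coeSubgraph_restrict_eq, inf_eq_right.mpr hN]
      rw [← hN', ncard_verts_coeSubgraph_s10] at h2
      have := h _ h2
      rw [← hN', lamanSlack_coeSubgraph, lamanSlack]
      omega
    · intro h J h2
      have := h _ (coeSubgraph_le J) (by rwa [ncard_verts_coeSubgraph_s10])
      rw [lamanSlack_coeSubgraph, lamanSlack] at this
      omega
  exact and_congr hcount hsub

lemma IsLamanTight.two_le_ncard_verts {M : G.Subgraph} (hM : M.IsLamanTight) :
    2 ≤ M.verts.ncard := by
  have := hM.1
  rw [lamanSlack] at this
  omega

variable [Finite V]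

lemma ncard_verts_sup_add_ncard_verts_inf (A B : G.Subgraph) :
    (A ⊔ B).verts.ncard + (A ⊓ B).verts.ncard = A.verts.ncard + B.verts.ncard :=
  Set.ncard_union_add_ncard_inter A.verts B.verts

lemma ncard_edgeSet_sup_add_ncard_edgeSet_inf (A B : G.Subgraph) :
    (A ⊔ B).edgeSet.ncard + (A ⊓ B).edgeSet.ncard = A.edgeSet.ncard + B.edgeSet.ncard := by
  rw [edgeSet_sup, edgeSet_inf]
  exact Set.ncard_union_add_ncard_inter A.edgeSet B.edgeSet

lemma lamanSlack_sup_add_lamanSlack_inf (A B : G.Subgraph) :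
    (A ⊔ B).lamanSlack + (A ⊓ B).lamanSlack = A.lamanSlack + B.lamanSlack := by
  have hv := ncard_verts_sup_add_ncard_verts_inf A B
  have he := ncard_edgeSet_sup_add_ncard_edgeSet_inf A B
  simp only [lamanSlack]
  omega

lemma lamanSlack_eq_of_le_sup {A B K : G.Subgraph} (hK : K ≤ A ⊔ B) :
    K.lamanSlack = (K ⊓ A).lamanSlack + (K ⊓ B).lamanSlack - (K ⊓ (A ⊓ B)).lamanSlack := by
  have hsup := inf_sup_inf_eq_of_le_sup hK
  have hinf : (K ⊓ A) ⊓ (K ⊓ B) = K ⊓ (A ⊓ B) := by rw [inf_inf_inf_comm, inf_idem]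
  have := lamanSlack_sup_add_lamanSlack_inf (K ⊓ A) (K ⊓ B)
  rw [hsup, hinf] at this
  omega

lemma ncard_verts_mono {M N : G.Subgraph} (h : N ≤ M) : N.verts.ncard ≤ M.verts.ncard :=
  Set.ncard_le_ncard (verts_mono h)

lemma edgeSet_eq_empty_of_ncard_verts_le_one_s10 {N : G.Subgraph} (h : N.verts.ncard ≤ 1) :
    N.edgeSet = ∅ := by
  refine Set.eq_empty_of_forall_notMem fun e he => ?_
  induction e using Sym2.ind with
  | _ a b =>
    exact (N.adj_sub he).ne
      (Set.ncard_le_one_iff_subsingleton.mp h (N.edge_vert he) (N.edge_vert (N.adj_symm he)))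

lemma lamanSlack_eq_of_ncard_verts_le_one {N : G.Subgraph} (h : N.verts.ncard ≤ 1) :
    N.lamanSlack = 2 * N.verts.ncard - 3 := by
  simp [lamanSlack, edgeSet_eq_empty_of_ncard_verts_le_one_s10 h]

lemma lamanSlack_sup_nonneg_of_ncard_inf_le_one {P Q : G.Subgraph}
    (hP : 2 ≤ P.verts.ncard → 0 ≤ P.lamanSlack) (hQ : 2 ≤ Q.verts.ncard → 0 ≤ Q.lamanSlack)
    (h2 : 2 ≤ (P ⊔ Q).verts.ncard) (h1 : (P ⊓ Q).verts.ncard ≤ 1) :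
    0 ≤ (P ⊔ Q).lamanSlack := by
  have hslack := lamanSlack_sup_add_lamanSlack_inf P Q
  have hverts := ncard_verts_sup_add_ncard_verts_inf P Q
  have hPQ := lamanSlack_eq_of_ncard_verts_le_one h1
  have hP' := ncard_verts_mono (inf_le_left : P ⊓ Q ≤ P)
  have hQ' := ncard_verts_mono (inf_le_right : P ⊓ Q ≤ Q)
  have hP_small (h : P.verts.ncard ≤ 1) := lamanSlack_eq_of_ncard_verts_le_one h
  have hQ_small (h : Q.verts.ncard ≤ 1) := lamanSlack_eq_of_ncard_verts_le_one h
  by_cases hPv : 2 ≤ P.verts.ncard <;> by_cases hQv : 2 ≤ Q.verts.ncard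
  · linarith [hP hPv, hQ hQv]
  · linarith [hP hPv, hQ_small (by omega)]
  · linarith [hQ hQv, hP_small (by omega)]
  · have := hP_small (by omega)
    have := hQ_small (by omega)
    omega

lemma IsLamanSparse.lamanSlack_nonneg_of_inf_le {A B K : G.Subgraph}
    (hA : A.IsLamanSparse) (hB : B.IsLamanSparse) (hAB : (A ⊓ B).IsLamanTight)
    (h₁ : A ⊓ B ≤ K) (h₂ : K ≤ A ⊔ B) : 0 ≤ K.lamanSlack := by
  have hAB2 := hAB.two_le_ncard_verts
  have hinf : K ⊓ (A ⊓ B) = A ⊓ B := inf_eq_right.mpr h₁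
  have hKA := hA (K ⊓ A) inf_le_right
    (hAB2.trans (ncard_verts_mono (le_inf h₁ inf_le_left)))
  have hKB := hB (K ⊓ B) inf_le_right
    (hAB2.trans (ncard_verts_mono (le_inf h₁ inf_le_right)))
  rw [lamanSlack_eq_of_le_sup h₂, hinf, hAB.1]
  omega

lemma IsLamanSparse.sup {A B : G.Subgraph} (hA : A.IsLamanSparse) (hB : B.IsLamanSparse)
    (hAB : (A ⊓ B).IsLamanTight) : (A ⊔ B).IsLamanSparse := by
  intro K hK h2
  by_cases h1 : (K ⊓ (A ⊓ B)).verts.ncard ≤ 1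
  · rw [← inf_sup_inf_eq_of_le_sup hK] at h2 ⊢
    refine lamanSlack_sup_nonneg_of_ncard_inf_le_one (hA _ inf_le_right) (hB _ inf_le_right) h2 ?_
    rwa [inf_inf_inf_comm, inf_idem]
  · have hbig := hA.lamanSlack_nonneg_of_inf_le hB hAB le_sup_right
      (sup_le hK (inf_le_left.trans le_sup_left))
    have hsmall := hAB.2 (K ⊓ (A ⊓ B)) inf_le_right (by omega)
    have := lamanSlack_sup_add_lamanSlack_inf K (A ⊓ B)
    rw [hAB.1] at this
    omega

lemma IsLamanTight.sup {A B : G.Subgraph} (hA : A.IsLamanTight) (hB : B.IsLamanTight)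
    (hAB : (A ⊓ B).IsLamanTight) : (A ⊔ B).IsLamanTight := by
  refine ⟨?_, hA.2.sup hB.2 hAB⟩
  have := lamanSlack_sup_add_lamanSlack_inf A B
  rw [hA.1, hB.1, hAB.1] at this
  omega

end SimpleGraph.Subgraph

/-- If two Laman graphs `G₁ = (V₁, E₁)` and `G₂ = (V₂, E₂)` intersect in a
graph `H = (V₁ ∩ V₂, E₁ ∩ E₂)` which is itself a Laman graph (a subgraph of both), then
their union is a Laman graph with `|V₁| + |V₂| - |V₁ ∩ V₂|` vertices. -/
theorem laman_glue_laman_subgraph {V : Type*} [Finite V]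
    (H₁ H₂ : (⊤ : SimpleGraph V).Subgraph)
    (h₁ : IsLaman H₁.coe) (h₂ : IsLaman H₂.coe)
    (hinter : IsLaman (H₁ ⊓ H₂).coe) :
    IsLaman (H₁ ⊔ H₂).coe ∧
      (H₁ ⊔ H₂).verts.ncard =
        H₁.verts.ncard + H₂.verts.ncard - (H₁ ⊓ H₂).verts.ncard := by
  rw [Subgraph.isLaman_coe_iff_s10] at h₁ h₂ hinter ⊢
  refine ⟨h₁.sup h₂ hinter, ?_⟩
  have := Subgraph.ncard_verts_sup_add_ncard_verts_inf H₁ H₂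
  omega
end

section
/- The graph on four vertices {1,2,3,4} with edge set {{1,2},{1,3},{2,3},{2,4},{3,4}} (the complete graph K₄ minus one edge) is a Laman graph and has Laman number 4; that is, there is a dense open subset U ⊆ ℂ⁵ of labelings such that for every λ ∈ U there are exactly 4 equivalence classes of compatible realizations. -/
open SimpleGraph

/-- The complete graph on four vertices minus one edge: vertices `{0, 1, 2, 3}` and edges
`{0,1}, {0,2}, {1,2}, {1,3}, {2,3}` (relabeling of `{1,2,3,4}` from the statement). -/
def K4minus : SimpleGraph (Fin 4) :=
  SimpleGraph.fromEdgeSet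
    ({s(0, 1), s(0, 2), s(1, 2), s(1, 3), s(2, 3)} : Set (Sym2 (Fin 4)))


/-!
A direct isometry moves the common edge `{1, 2}` of the triangles `0 1 2` and `3 1 2` to
`(0, 0), (z, 0)` with `z² = λ₁₂`. In this position vertex `0` (resp. `3`) is determined by its
two edge lengths and by the signed area of its triangle, and signed areas are invariant under
direct isometries. By Heron's formula each signed area is determined by `λ` up to sign, so when
`λ₁₂` and both Heron expressions are nonzero the classes of realizations correspond to the
`2 × 2` choices of signs. These labelings form the complement of the zero set of a nonzero
polynomial, which is open and, by the identity theorem, dense.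
-/

open Matrix

section PlaneGeometry

variable {R : Type*} [CommRing R]

def sqDist (p q : Fin 2 → R) : R := (p 0 - q 0) ^ 2 + (p 1 - q 1) ^ 2

/-- Twice the signed area of the triangle `a b c`. -/
def cross (a b c : Fin 2 → R) : R := (a 0 - b 0) * (c 1 - b 1) - (a 1 - b 1) * (c 0 - b 0)

/-- Heron's formula in the squared side lengths: `heron a b c = 16 · area²`. -/
def heron (a b c : R) : R := 4 * a * c - (a + c - b) ^ 2

lemma sqDist_comm (p q : Fin 2 → R) : sqDist p q = sqDist q p := by
  simp only [sqDist]
  ring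

lemma four_mul_cross_sq (a b c : Fin 2 → R) :
    4 * cross a b c ^ 2 = heron (sqDist a b) (sqDist a c) (sqDist c b) := by
  simp only [cross, heron, sqDist]
  ring

lemma mulVec_fin_two_apply (A : Matrix (Fin 2) (Fin 2) R) (x : Fin 2 → R) (i : Fin 2) :
    (A *ᵥ x) i = A i 0 * x 0 + A i 1 * x 1 := by
  simp [mulVec, dotProduct, Fin.sum_univ_two]

lemma sqDist_mulVec_add {A : Matrix (Fin 2) (Fin 2) R} (hA : Aᵀ * A = 1) (p q b : Fin 2 → R) :
    sqDist (A *ᵥ p + b) (A *ᵥ q + b) = sqDist p q := by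
  have h00 := congrFun (congrFun hA 0) 0
  have h01 := congrFun (congrFun hA 0) 1
  have h11 := congrFun (congrFun hA 1) 1
  simp only [mul_apply, Fin.sum_univ_two, transpose_apply, one_apply_eq,
    one_apply_ne (show (0 : Fin 2) ≠ 1 by decide)] at h00 h01 h11
  simp only [sqDist, Pi.add_apply, mulVec_fin_two_apply]
  linear_combination (p 0 - q 0) ^ 2 * h00 + 2 * (p 0 - q 0) * (p 1 - q 1) * h01 +
    (p 1 - q 1) ^ 2 * h11

lemma cross_mulVec_add {A : Matrix (Fin 2) (Fin 2) R} (hA : A.det = 1) (p q r b : Fin 2 → R) :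
    cross (A *ᵥ p + b) (A *ᵥ q + b) (A *ᵥ r + b) = cross p q r := by
  rw [det_fin_two] at hA
  simp only [cross, Pi.add_apply, mulVec_fin_two_apply]
  linear_combination ((p 0 - q 0) * (r 1 - q 1) - (p 1 - q 1) * (r 0 - q 0)) * hA

end PlaneGeometry

section NormalPosition

variable {K : Type*} [Field K] {z : K}

lemma exists_isometry_to_axis {p q : Fin 2 → K} (hz : z ≠ 0) (hpq : sqDist q p = z ^ 2) :
    ∃ (A : Matrix (Fin 2) (Fin 2) K) (b : Fin 2 → K),
      Aᵀ * A = 1 ∧ A.det = 1 ∧ A *ᵥ p + b = 0 ∧ A *ᵥ q + b = ![z, 0] := by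
  obtain ⟨c, hc⟩ : ∃ c, q 0 - p 0 = c * z := ⟨_, (div_mul_cancel₀ _ hz).symm⟩
  obtain ⟨s, hs⟩ : ∃ s, q 1 - p 1 = s * z := ⟨_, (div_mul_cancel₀ _ hz).symm⟩
  have hcs : c ^ 2 + s ^ 2 = 1 := by
    refine mul_right_cancel₀ (pow_ne_zero 2 hz) ?_
    rw [sqDist, hc, hs] at hpq
    linear_combination hpq
  refine ⟨!![c, s; -s, c], -(!![c, s; -s, c] *ᵥ p), ?_, ?_, add_neg_cancel _, ?_⟩
  · have : !![c, s; -s, c]ᵀ * !![c, s; -s, c] = !![c ^ 2 + s ^ 2, 0; 0, c ^ 2 + s ^ 2] := by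
      ext i j
      fin_cases i <;> fin_cases j <;> simp [mul_apply, Fin.sum_univ_two] <;> ring
    rw [this, hcs, one_fin_two]
  · rw [det_fin_two_of]
    linear_combination hcs
  · rw [← sub_eq_add_neg, ← mulVec_sub]
    ext i
    fin_cases i
    · rw [mulVec_fin_two_apply]
      change c * (q 0 - p 0) + s * (q 1 - p 1) = z
      rw [hc, hs]
      linear_combination z * hcs
    · rw [mulVec_fin_two_apply]
      change -s * (q 0 - p 0) + c * (q 1 - p 1) = 0
      rw [hc, hs]
      ring

def normalPoint (z d₁ d₂ c : K) : Fin 2 → K := ![(d₁ - d₂ + z ^ 2) / (2 * z), -c / z]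

lemma eq_normalPoint (h2 : (2 : K) ≠ 0) (hz : z ≠ 0) (p : Fin 2 → K) :
    p = normalPoint z (sqDist p 0) (sqDist p ![z, 0]) (cross p 0 ![z, 0]) := by
  ext i
  fin_cases i
  · change p 0 = ((p 0 - 0) ^ 2 + (p 1 - 0) ^ 2 - ((p 0 - z) ^ 2 + (p 1 - 0) ^ 2) + z ^ 2) / (2 * z)
    field_simp
    ring
  · change p 1 = -((p 0 - 0) * (0 - 0) - (p 1 - 0) * (z - 0)) / z
    field_simp
    ring

lemma sqDist_normalPoint_zero (h2 : (2 : K) ≠ 0) (hz : z ≠ 0) {d₁ d₂ c : K}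
    (hc : 4 * c ^ 2 = heron d₁ d₂ (z ^ 2)) : sqDist (normalPoint z d₁ d₂ c) 0 = d₁ := by
  change ((d₁ - d₂ + z ^ 2) / (2 * z) - 0) ^ 2 + (-c / z - 0) ^ 2 = d₁
  rw [heron] at hc
  field_simp
  linear_combination hc

lemma sqDist_normalPoint_base (h2 : (2 : K) ≠ 0) (hz : z ≠ 0) {d₁ d₂ c : K}
    (hc : 4 * c ^ 2 = heron d₁ d₂ (z ^ 2)) : sqDist (normalPoint z d₁ d₂ c) ![z, 0] = d₂ := by
  change ((d₁ - d₂ + z ^ 2) / (2 * z) - z) ^ 2 + (-c / z - 0) ^ 2 = d₂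
  rw [heron] at hc
  field_simp
  linear_combination hc

lemma cross_normalPoint (hz : z ≠ 0) (d₁ d₂ c : K) :
    cross (normalPoint z d₁ d₂ c) 0 ![z, 0] = c := by
  change ((d₁ - d₂ + z ^ 2) / (2 * z) - 0) * (0 - 0) - (-c / z - 0) * (z - 0) = c
  field_simp
  ring

end NormalPosition

lemma exists_sq_eq_of_ne_zero {K : Type*} [Field K] [IsAlgClosed K] {w : K} (hw : w ≠ 0) :
    ∃ r : K, r ≠ 0 ∧ r ^ 2 = w := by
  obtain ⟨r, hr⟩ := IsAlgClosed.exists_pow_nat_eq w two_pos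
  exact ⟨r, by rintro rfl; exact hw (by rw [← hr]; ring), hr⟩

lemma ncard_setOf_mul_sq_eq {K : Type*} [Field K] [IsAlgClosed K] (h2 : (2 : K) ≠ 0) {a w : K}
    (ha : a ≠ 0) (hw : w ≠ 0) : {c : K | a * c ^ 2 = w}.ncard = 2 := by
  obtain ⟨r, hr0, hr⟩ := exists_sq_eq_of_ne_zero (div_ne_zero hw ha)
  have hset : {c : K | a * c ^ 2 = w} = {r, -r} := by
    ext c
    rw [Set.mem_ofPred_eq, Set.mem_insert_iff, Set.mem_singleton_iff, ← sq_eq_sq_iff_eq_or_eq_neg,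
      hr, eq_div_iff ha, mul_comm]
  rw [hset, Set.ncard_pair]
  intro h
  exact hr0 ((mul_eq_zero.mp (by linear_combination h : (2 : K) * r = 0)).resolve_left h2)

theorem AnalyticOnNhd.dense_setOf_ne_zero {𝕜 E F : Type*} [NontriviallyNormedField 𝕜]
    [NormedAddCommGroup E] [NormedSpace 𝕜 E] [PreconnectedSpace E] [NormedAddCommGroup F]
    [NormedSpace 𝕜 F] {f : E → F} (hf : AnalyticOnNhd 𝕜 f Set.univ) (hf0 : f ≠ 0) :
    Dense {x | f x ≠ 0} := by
  intro x
  by_contra hx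
  rw [mem_closure_iff_frequently, Filter.not_frequently] at hx
  exact hf0 (hf.eq_of_eventuallyEq analyticOnNhd_const (hx.mono fun _ => not_not.mp))

theorem MvPolynomial.dense_setOf_eval_ne_zero {σ : Type*} [Fintype σ] {p : MvPolynomial σ ℂ}
    (hp : p ≠ 0) : Dense {x : σ → ℂ | eval x p ≠ 0} := by
  have hp_analytic : AnalyticOnNhd ℂ (fun x : σ → ℂ => eval x p) Set.univ :=
    AnalyticOnNhd.eval_continuousLinearMap (ContinuousLinearMap.id ℂ (σ → ℂ)) p
  exact hp_analytic.dense_setOf_ne_zero fun h =>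
    hp (MvPolynomial.funext fun x => by simpa using congrFun h x)

section Realizations

variable {V : Type*} {ρ ρ' : V → Fin 2 → ℂ}

lemma EquivRealization.sqDist_eq (h : EquivRealization ρ ρ') (u v : V) :
    sqDist (ρ' u) (ρ' v) = sqDist (ρ u) (ρ v) := by
  obtain ⟨A, b, hA, -, hρ'⟩ := h
  rw [hρ', hρ', sqDist_mulVec_add hA]

lemma EquivRealization.cross_eq (h : EquivRealization ρ ρ') (u v w : V) :
    cross (ρ' u) (ρ' v) (ρ' w) = cross (ρ u) (ρ v) (ρ w) := by
  obtain ⟨A, b, -, hdet, hρ'⟩ := h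
  rw [hρ', hρ', hρ', cross_mulVec_add hdet]

lemma Compatible.of_equivRealization {G : SimpleGraph V} {lam : G.edgeSet → ℂ}
    (hρ : Compatible G lam ρ) (h : EquivRealization ρ ρ') : Compatible G lam ρ' :=
  fun u v huv => (h.sqDist_eq u v).trans (hρ u v huv)

lemma compatible_of_forall_lt [LinearOrder V] {G : SimpleGraph V} {lam : G.edgeSet → ℂ}
    (h : ∀ u v (huv : G.Adj u v), u < v → sqDist (ρ u) (ρ v) = lam ⟨s(u, v), huv⟩) :
    Compatible G lam ρ := by
  intro u v huv
  rcases lt_or_gt_of_ne huv.ne with hlt | hlt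
  · exact h u v huv hlt
  · change sqDist (ρ u) (ρ v) = _
    rw [sqDist_comm, h v u huv.symm hlt]
    simp only [Sym2.eq_swap]

lemma exists_equivRealization_to_axis (ρ : V → Fin 2 → ℂ) {a b : V} {z : ℂ} (hz : z ≠ 0)
    (hab : sqDist (ρ b) (ρ a) = z ^ 2) :
    ∃ ρ', EquivRealization ρ ρ' ∧ ρ' a = 0 ∧ ρ' b = ![z, 0] := by
  obtain ⟨A, t, hA, hdet, ha, hb⟩ := exists_isometry_to_axis hz hab
  exact ⟨fun v => A *ᵥ ρ v + t, ⟨A, t, hA, hdet, fun _ => rfl⟩, ha, hb⟩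

end Realizations

namespace K4minus

def edges : Finset (Sym2 (Fin 4)) := {s(0, 1), s(0, 2), s(1, 2), s(1, 3), s(2, 3)}

lemma edgeSet_eq : K4minus.edgeSet = edges := by
  ext e
  induction e using Sym2.ind with
  | _ u v => fin_cases u <;> fin_cases v <;> simp [K4minus, edges]

instance : DecidableRel K4minus.Adj := fun u v =>
  decidable_of_iff (s(u, v) ∈ edges) (by rw [← Finset.mem_coe, ← edgeSet_eq, mem_edgeSet])

lemma card_filter_edges_add_three_le (s : Finset (Fin 4)) (hs : 2 ≤ s.card) :
    (edges.filter fun e => ∀ v ∈ e, v ∈ s).card + 3 ≤ 2 * s.card := by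
  revert s
  decide

lemma isLaman : IsLaman K4minus := by
  refine ⟨by rw [edgeSet_eq, Set.ncard_coe_finset, Nat.card_eq_fintype_card, Fintype.card_fin]; rfl,
    fun H hH => ?_⟩
  classical
  set s := H.verts.toFinset
  have hs : H.verts.ncard = s.card := Set.ncard_eq_toFinset_card' _
  have hsub : H.edgeSet ⊆ ↑(edges.filter fun e => ∀ v ∈ e, v ∈ s) := fun e he => by
    rw [Finset.coe_filter]
    exact ⟨Finset.mem_coe.mp (edgeSet_eq ▸ H.edgeSet_subset he),
      fun v hv => Set.mem_toFinset.mpr (H.mem_verts_of_mem_edge he hv)⟩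
  have := (Set.ncard_le_ncard hsub (Finset.finite_toSet _)).trans_eq (Set.ncard_coe_finset _)
  have := card_filter_edges_add_three_le s (hs ▸ hH)
  omega

def e01 : K4minus.edgeSet := ⟨s(0, 1), by simp [edgeSet_eq, edges]⟩
def e02 : K4minus.edgeSet := ⟨s(0, 2), by simp [edgeSet_eq, edges]⟩
def e12 : K4minus.edgeSet := ⟨s(1, 2), by simp [edgeSet_eq, edges]⟩
def e13 : K4minus.edgeSet := ⟨s(1, 3), by simp [edgeSet_eq, edges]⟩
def e23 : K4minus.edgeSet := ⟨s(2, 3), by simp [edgeSet_eq, edges]⟩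

variable {lam : K4minus.edgeSet → ℂ}

lemma compatible_iff {ρ : Fin 4 → Fin 2 → ℂ} :
    Compatible K4minus lam ρ ↔
      sqDist (ρ 0) (ρ 1) = lam e01 ∧ sqDist (ρ 0) (ρ 2) = lam e02 ∧
        sqDist (ρ 1) (ρ 2) = lam e12 ∧ sqDist (ρ 1) (ρ 3) = lam e13 ∧
          sqDist (ρ 2) (ρ 3) = lam e23 := by
  refine ⟨fun h => ⟨h 0 1 (by decide), h 0 2 (by decide), h 1 2 (by decide), h 1 3 (by decide),
    h 2 3 (by decide)⟩, ?_⟩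
  rintro ⟨h01, h02, h12, h13, h23⟩
  refine compatible_of_forall_lt fun u v huv hlt => ?_
  fin_cases u <;> fin_cases v <;>
    first | assumption | exact absurd huv (by decide) | exact absurd hlt (by decide)

def shape (ρ : Fin 4 → Fin 2 → ℂ) : ℂ × ℂ := (cross (ρ 0) (ρ 1) (ρ 2), cross (ρ 3) (ρ 1) (ρ 2))

variable (lam) in
def classShape : RealizationClasses K4minus lam → ℂ × ℂ :=
  Quot.lift (fun ρ => shape ρ.1) fun _ _ h => by simp only [shape, h.cross_eq]

variable (lam) in
def shapeSet : Set (ℂ × ℂ) :=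
  {c | 4 * c ^ 2 = heron (lam e01) (lam e02) (lam e12)} ×ˢ
    {c | 4 * c ^ 2 = heron (lam e13) (lam e23) (lam e12)}

variable (lam) in
noncomputable def normalRealization (z : ℂ) (c : ℂ × ℂ) : Fin 4 → Fin 2 → ℂ :=
  ![normalPoint z (lam e01) (lam e02) c.1, 0, ![z, 0], normalPoint z (lam e13) (lam e23) c.2]

lemma shape_mem_shapeSet {ρ : Fin 4 → Fin 2 → ℂ} (hρ : Compatible K4minus lam ρ) :
    shape ρ ∈ shapeSet lam := by
  obtain ⟨h01, h02, h12, h13, h23⟩ := compatible_iff.mp hρ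
  constructor
  · rw [Set.mem_ofPred_eq, shape, four_mul_cross_sq, h01, h02, sqDist_comm, h12]
  · rw [Set.mem_ofPred_eq, shape, four_mul_cross_sq, sqDist_comm, h13, sqDist_comm, h23,
      sqDist_comm, h12]

variable {z : ℂ}

lemma compatible_normalRealization (hz : z ≠ 0) (hz12 : z ^ 2 = lam e12) {c : ℂ × ℂ}
    (hc : c ∈ shapeSet lam) : Compatible K4minus lam (normalRealization lam z c) := by
  obtain ⟨hc₁, hc₂⟩ := hc
  rw [Set.mem_ofPred_eq, ← hz12] at hc₁ hc₂
  simp only [compatible_iff, normalRealization, cons_val_zero, cons_val_one,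
    cons_val_two, cons_val_three, head_cons, tail_cons]
  refine ⟨sqDist_normalPoint_zero two_ne_zero hz hc₁, sqDist_normalPoint_base two_ne_zero hz hc₁,
    ?_, ?_, ?_⟩
  · simpa [sqDist] using hz12
  · rw [sqDist_comm, sqDist_normalPoint_zero two_ne_zero hz hc₂]
  · rw [sqDist_comm, sqDist_normalPoint_base two_ne_zero hz hc₂]

lemma shape_normalRealization (hz : z ≠ 0) (c : ℂ × ℂ) :
    shape (normalRealization lam z c) = c := by
  simp only [shape, normalRealization, cons_val_zero, cons_val_one,
    cons_val_two, cons_val_three, head_cons, tail_cons, cross_normalPoint hz]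

lemma equivRealization_normalRealization (hz : z ≠ 0) (hz12 : z ^ 2 = lam e12)
    {ρ : Fin 4 → Fin 2 → ℂ} (hρ : Compatible K4minus lam ρ) :
    EquivRealization ρ (normalRealization lam z (shape ρ)) := by
  obtain ⟨-, -, h12, -, -⟩ := compatible_iff.mp hρ
  obtain ⟨σ, hρσ, hσ1, hσ2⟩ :=
    exists_equivRealization_to_axis ρ (a := 1) (b := 2) hz (by rw [sqDist_comm, h12, hz12])
  obtain ⟨h01, h02, -, h13, h23⟩ := compatible_iff.mp (hρ.of_equivRealization hρσ)
  suffices σ = normalRealization lam z (shape ρ) from this ▸ hρσ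
  have hσ0 := eq_normalPoint two_ne_zero hz (σ 0)
  have hσ3 := eq_normalPoint two_ne_zero hz (σ 3)
  rw [← hσ1, ← hσ2, hρσ.cross_eq] at hσ0 hσ3
  rw [sqDist_comm] at h13 h23
  rw [h01, h02] at hσ0
  rw [h13, h23] at hσ3
  funext v
  fin_cases v
  · exact hσ0
  · exact hσ1
  · exact hσ2
  · exact hσ3

lemma classShape_injective (h12 : lam e12 ≠ 0) : Function.Injective (classShape lam) := by
  obtain ⟨z, hz, hz12⟩ := exists_sq_eq_of_ne_zero h12
  have mk_eq : ∀ ρ : {ρ // Compatible K4minus lam ρ}, Quot.mk _ ρ =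
      (Quot.mk _ ⟨normalRealization lam z (shape ρ.1),
        compatible_normalRealization hz hz12 (shape_mem_shapeSet ρ.2)⟩ :
        RealizationClasses K4minus lam) :=
    fun ρ => Quot.sound (equivRealization_normalRealization hz hz12 ρ.2)
  rintro ⟨ρ⟩ ⟨ρ'⟩ h
  change shape ρ.1 = shape ρ'.1 at h
  rw [mk_eq ρ, mk_eq ρ']
  exact congrArg (Quot.mk _) (Subtype.ext (congrArg (normalRealization lam z) h))

lemma range_classShape (h12 : lam e12 ≠ 0) : Set.range (classShape lam) = shapeSet lam := by
  obtain ⟨z, hz, hz12⟩ := exists_sq_eq_of_ne_zero h12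
  refine Set.Subset.antisymm ?_ fun c hc => ?_
  · rintro _ ⟨⟨ρ⟩, rfl⟩
    exact shape_mem_shapeSet ρ.2
  · exact ⟨Quot.mk _ ⟨_, compatible_normalRealization hz hz12 hc⟩, shape_normalRealization hz c⟩

lemma card_realizationClasses (h12 : lam e12 ≠ 0)
    (h0 : heron (lam e01) (lam e02) (lam e12) ≠ 0) (h3 : heron (lam e13) (lam e23) (lam e12) ≠ 0) :
    Nat.card (RealizationClasses K4minus lam) = 4 := by
  have h4 : (4 : ℂ) ≠ 0 := by norm_num
  rw [← Nat.card_range_of_injective (classShape_injective h12), range_classShape h12,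
    Nat.card_coe_set_eq, shapeSet, Set.ncard_prod, ncard_setOf_mul_sq_eq two_ne_zero h4 h0,
    ncard_setOf_mul_sq_eq two_ne_zero h4 h3]

open MvPolynomial in
noncomputable def genericity : MvPolynomial K4minus.edgeSet ℂ :=
  X e12 * heron (X e01) (X e02) (X e12) * heron (X e13) (X e23) (X e12)

lemma eval_genericity (lam : K4minus.edgeSet → ℂ) :
    MvPolynomial.eval lam genericity =
      lam e12 * heron (lam e01) (lam e02) (lam e12) * heron (lam e13) (lam e23) (lam e12) := by
  simp [genericity, heron]

lemma genericity_ne_zero : genericity ≠ 0 := by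
  intro h
  have := eval_genericity 1
  norm_num [h, heron] at this

end K4minus

/-- The graph `K₄` minus one edge is a Laman graph with Laman number `4`:
there is a dense open set of labelings for each of which there are exactly `4` equivalence
classes of compatible realizations. -/
theorem k4_minus_edge_laman_number_four :
    IsLaman K4minus ∧ HasLamanNumber K4minus 4 := by
  refine ⟨K4minus.isLaman, {lam | MvPolynomial.eval lam K4minus.genericity ≠ 0},
    isOpen_ne_fun (MvPolynomial.continuous_eval _) continuous_const,
    MvPolynomial.dense_setOf_eval_ne_zero K4minus.genericity_ne_zero, fun lam hlam => ?_⟩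
  simp only [Set.mem_ofPred_eq, K4minus.eval_genericity, mul_ne_zero_iff] at hlam
  exact K4minus.card_realizationClasses hlam.1.1 hlam.1.2 hlam.2
end
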